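/- arXiv:1001.1373 — 6 statements merged into one kernel-verified Lean document; each statement's English description precedes it below -/
import Mathlib

section
/- If V is a vector space and X, Y are any two linear subspaces of V, then there exists a basis B of V such that both X ∩ B is a basis of X and Y ∩ B is a basis of Y. -/
/-!
Take a basis `S₀` of `X ⊓ Y` and extend it to bases `SX` of `X` and `SY` of `Y`. Any vector in
`span SX ⊓ span SY = X ⊓ Y` lies in `span S₀ ⊆ span (SX ∩ SY)`, which forces `SX ∪ SY` to be linearly
independent; extend it to a basis `B` of `V`. An independent set meets the span of one of its
subsets only in that subset, so `X ∩ B = SX` and `Y ∩ B = SY`.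
-/

open Submodule Set

section

variable {K V : Type*} [DivisionRing K] [AddCommGroup V] [Module K V]

theorem LinearIndepOn.exists_extension_span_eq {s : Set V} {W : Submodule K V}
    (hs : LinearIndepOn K id s) (hsW : s ⊆ W) :
    ∃ b, s ⊆ b ∧ LinearIndepOn K id b ∧ span K b = W := by
  obtain ⟨b, hbW, hsb, hWb, hb⟩ := exists_linearIndepOn_id_extension hs hsW
  exact ⟨b, hsb, hb, le_antisymm (span_le.2 hbW) (fun v hv ↦ hWb hv)⟩

theorem LinearIndepOn.span_inter_eq {B s : Set V} (hB : LinearIndepOn K id B) (hsB : s ⊆ B) :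
    (span K s : Set V) ∩ B = s :=
  subset_antisymm
    (fun _ ⟨hbs, hbB⟩ ↦ (hB.mono hsB).mem_span_iff_id.1 hbs (hB.mono (insert_subset hbB hsB)))
    (subset_inter subset_span hsB)

theorem LinearIndepOn.id_union_of_inf_span_le {s t : Set V} (hs : LinearIndepOn K id s)
    (ht : LinearIndepOn K id t) (hst : span K s ⊓ span K t ≤ span K (s ∩ t)) :
    LinearIndepOn K id (s ∪ t) := by
  have hsplit : Disjoint (span K (t ∩ s)) (span K (t \ s)) :=
    ((linearIndepOn_id_union_iff disjoint_sdiff_inter.symm).1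
      (by rwa [inter_union_sdiff])).2.2
  rw [← union_sdiff_self]
  refine hs.id_union (ht.mono sdiff_subset) (disjoint_def.2 fun v hvs hvd ↦ ?_)
  have hv : v ∈ span K (t ∩ s) := inter_comm s t ▸ hst ⟨hvs, span_mono sdiff_subset hvd⟩
  exact disjoint_def.1 hsplit v hv hvd

end

/-- Any two linear subspaces `X, Y` of a vector space `V` are basis-compatible:
there is a basis `B` of `V` such that `X ∩ B` is a basis of `X` and `Y ∩ B` is
a basis of `Y`. -/
theorem stmt3 {F V : Type*} [Field F] [AddCommGroup V] [Module F V]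
    (X Y : Submodule F V) :
    ∃ B : Set V, LinearIndependent F ((↑) : B → V) ∧ Submodule.span F B = ⊤ ∧
      LinearIndependent F ((↑) : ((X : Set V) ∩ B : Set V) → V) ∧
      Submodule.span F ((X : Set V) ∩ B) = X ∧
      LinearIndependent F ((↑) : ((Y : Set V) ∩ B : Set V) → V) ∧
      Submodule.span F ((Y : Set V) ∩ B) = Y := by
  obtain ⟨S₀, -, hS₀, hspan₀⟩ :=
    (linearIndepOn_empty F (id : V → V)).exists_extension_span_eq
      (empty_subset ((X ⊓ Y : Submodule F V) : Set V))
  obtain ⟨SX, h₀X, hSX, hspanX⟩ :=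
    hS₀.exists_extension_span_eq (span_le.1 (hspan₀.trans_le inf_le_left))
  obtain ⟨SY, h₀Y, hSY, hspanY⟩ :=
    hS₀.exists_extension_span_eq (span_le.1 (hspan₀.trans_le inf_le_right))
  have hunion : LinearIndepOn F id (SX ∪ SY) := hSX.id_union_of_inf_span_le hSY <| by
    rw [hspanX, hspanY, ← hspan₀]
    exact span_mono (subset_inter h₀X h₀Y)
  obtain ⟨B, hSXYB, hB, hspanB⟩ := hunion.exists_extension_span_eq (W := ⊤) (subset_univ _)
  have hXB : (X : Set V) ∩ B = SX := hspanX ▸ hB.span_inter_eq (subset_union_left.trans hSXYB)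
  have hYB : (Y : Set V) ∩ B = SY := hspanY ▸ hB.span_inter_eq (subset_union_right.trans hSXYB)
  refine ⟨B, hB, hspanB, ?_⟩
  rw [hXB, hYB]
  exact ⟨hSX, hspanX, hSY, hspanY⟩
end

section
/- For any serializable network code on the 2-cycle with sources x into u and y into v and edges a = (u,v), b = (v,u), if H(a) + H(b) > 0 then H(a) + H(b) > H(a|x) + H(b|y) (the 'greedy inequality'). Equivalently, H(a) + H(b) > H(ax) - H(x) + H(by) - H(y). -/
/-!
If `a` and `x` are dependent, Gibbs' inequality gives `H(ax) < H(a) + H(x)` (the mutual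
information is a sum of terms `q · klFun (p / q) ≥ 0`, which vanish only where `p = q`), while
`H(by) ≤ H(b) + H(y)`; symmetrically if `b` and `y` are dependent. If instead `a ⟂ x` and `b ⟂ y`,
induct on the rounds of a serialization: once all earlier symbols on `b` are constant, the next
symbol on `a` is a function of `x` as well as of `a`, and a common function of two independent
variables is constant. Hence `a` and `b` are constant, contradicting `H(a) + H(b) > 0`.
-/

/-- Shannon entropy of (the random variable given by) a function `f` on a finite
message set `M` equipped with the uniform distribution. -/
noncomputable def ent {M : Type*} [Fintype M] {A : Type*} [DecidableEq A] (f : M → A) : ℝ :=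
  -∑ a ∈ Finset.univ.image f,
      (((Finset.univ.filter fun m => f m = a).card : ℝ) / (Fintype.card M : ℝ)) *
        Real.log (((Finset.univ.filter fun m => f m = a).card : ℝ) / (Fintype.card M : ℝ))

/-- Serializability of a network code on the 2-cycle with sources `x` (into `u`)
and `y` (into `v`) and edges `a = (u,v)`, `b = (v,u)`.  There exist time-indexed
coding functions `Fa i`, `Fb i` whose joint values determine and are determined by
`fa`, `fb` respectively, and such that each `Fa j` is computable from `fx` together
with the earlier values `Fb i`, `i < j` (and symmetrically for `Fb j`). -/
def Serializable2Cycle {M X Y A B : Type*}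
    (fx : M → X) (fy : M → Y) (fa : M → A) (fb : M → B) : Prop :=
  ∃ (k : ℕ) (SA SB : Fin k → Type) (Fa : ∀ i, M → SA i) (Fb : ∀ i, M → SB i),
    (∀ m₁ m₂, fa m₁ = fa m₂ ↔ ∀ i, Fa i m₁ = Fa i m₂) ∧
    (∀ m₁ m₂, fb m₁ = fb m₂ ↔ ∀ i, Fb i m₁ = Fb i m₂) ∧
    (∀ j m₁ m₂, fx m₁ = fx m₂ → (∀ i, i < j → Fb i m₁ = Fb i m₂) → Fa j m₁ = Fa j m₂) ∧
    (∀ j m₁ m₂, fy m₁ = fy m₂ → (∀ i, i < j → Fa i m₁ = Fa i m₂) → Fb j m₁ = Fb j m₂)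

open Finset Real InformationTheory

section Entropy

variable {M A X : Type*} [Fintype M] [DecidableEq A] [DecidableEq X]

noncomputable def prob (f : M → A) (a : A) : ℝ := #{m | f m = a} / Fintype.card M

lemma prob_eq_zero_of_notMem_image {f : M → A} {a : A} (ha : a ∉ univ.image f) :
    prob f a = 0 := by
  simp_all [prob]

lemma prob_nonneg (f : M → A) (a : A) : 0 ≤ prob f a := by
  unfold prob
  positivity

lemma prob_pos_of_mem_image {f : M → A} {a : A} (ha : a ∈ univ.image f) : 0 < prob f a := by
  obtain ⟨m, -, rfl⟩ := mem_image.1 ha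
  have : 0 < #{m' | f m' = f m} := card_pos.2 ⟨m, by simp⟩
  have : 0 < Fintype.card M := Fintype.card_pos_iff.2 ⟨m⟩
  unfold prob
  positivity

lemma ent_eq_sum_negMulLog (f : M → A) {S : Finset A} (hS : univ.image f ⊆ S) :
    ent f = ∑ a ∈ S, negMulLog (prob f a) := by
  rw [← sum_subset hS fun a _ ha => by rw [prob_eq_zero_of_notMem_image ha, negMulLog_zero]]
  simp only [ent, prob, negMulLog, ← sum_neg_distrib, neg_mul]

lemma ent_eq_zero_of_forall_eq {f : M → A} (hf : ∀ m₁ m₂, f m₁ = f m₂) : ent f = 0 := by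
  rw [ent_eq_sum_negMulLog f subset_rfl]
  refine sum_eq_zero fun a ha => ?_
  obtain ⟨m, -, rfl⟩ := mem_image.1 ha
  have hM : (Fintype.card M : ℝ) ≠ 0 := by
    have : Nonempty M := ⟨m⟩
    positivity
  rw [prob, filter_true_of_mem fun m' _ => hf m' m, card_univ, div_self hM, negMulLog_one]

lemma sum_prob [Nonempty M] (f : M → A) : ∑ a ∈ univ.image f, prob f a = 1 := by
  have hM : (Fintype.card M : ℝ) ≠ 0 := by positivity
  simp only [prob]
  rw [← sum_div, div_eq_one_iff_eq hM, ← Nat.cast_sum, ← card_eq_sum_card_image f univ,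
    card_univ]

lemma sum_prob_pair_fst (f : M → A) (g : M → X) (a : A) :
    ∑ x ∈ univ.image g, prob (fun m => (f m, g m)) (a, x) = prob f a := by
  rw [prob, card_eq_sum_card_fiberwise (f := g) (t := univ.image g)
    fun m _ => mem_image_of_mem g (mem_univ m)]
  simp only [prob, Prod.ext_iff, filter_filter, Nat.cast_sum, sum_div]

lemma sum_prob_pair_snd (f : M → A) (g : M → X) (x : X) :
    ∑ a ∈ univ.image f, prob (fun m => (f m, g m)) (a, x) = prob g x := by
  rw [prob, card_eq_sum_card_fiberwise (f := f) (t := univ.image f)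
    fun m _ => mem_image_of_mem f (mem_univ m)]
  simp only [prob, Prod.ext_iff, filter_filter, Nat.cast_sum, sum_div, and_comm]

lemma sum_prob_pair_mul_log_fst (f : M → A) (g : M → X) :
    ∑ s ∈ univ.image f ×ˢ univ.image g, prob (fun m => (f m, g m)) s * log (prob f s.1) =
      -ent f := by
  simp only [sum_product, ← sum_mul, sum_prob_pair_fst, ent_eq_sum_negMulLog f subset_rfl,
    negMulLog, neg_mul, sum_neg_distrib, neg_neg]

lemma sum_prob_pair_mul_log_snd (f : M → A) (g : M → X) :
    ∑ s ∈ univ.image f ×ˢ univ.image g, prob (fun m => (f m, g m)) s * log (prob g s.2) =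
      -ent g := by
  simp only [sum_product_right, ← sum_mul, sum_prob_pair_snd, ent_eq_sum_negMulLog g subset_rfl,
    negMulLog, neg_mul, sum_neg_distrib, neg_neg]

lemma image_pair_subset_product (f : M → A) (g : M → X) :
    univ.image (fun m => (f m, g m)) ⊆ univ.image f ×ˢ univ.image g := by
  intro s hs
  obtain ⟨m, -, rfl⟩ := mem_image.1 hs
  simp

lemma prob_mul_prob_pos {f : M → A} {g : M → X} {s : A × X}
    (hs : s ∈ univ.image f ×ˢ univ.image g) : 0 < prob f s.1 * prob g s.2 :=
  mul_pos (prob_pos_of_mem_image (mem_product.1 hs).1)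
    (prob_pos_of_mem_image (mem_product.1 hs).2)

lemma ent_add_ent_sub_ent_pair [Nonempty M] (f : M → A) (g : M → X) :
    ent f + ent g - ent (fun m => (f m, g m)) =
      ∑ s ∈ univ.image f ×ˢ univ.image g, prob f s.1 * prob g s.2 *
        klFun (prob (fun m => (f m, g m)) s / (prob f s.1 * prob g s.2)) := by
  have hterm : ∀ s ∈ univ.image f ×ˢ univ.image g,
      prob f s.1 * prob g s.2 * klFun (prob (fun m => (f m, g m)) s / (prob f s.1 * prob g s.2)) =
        -negMulLog (prob (fun m => (f m, g m)) s)
          - prob (fun m => (f m, g m)) s * log (prob f s.1)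
          - prob (fun m => (f m, g m)) s * log (prob g s.2)
          + prob f s.1 * prob g s.2 - prob (fun m => (f m, g m)) s := by
    intro s hs
    obtain ⟨ha, hx⟩ := mem_product.1 hs
    have hfa := prob_pos_of_mem_image ha
    have hgx := prob_pos_of_mem_image hx
    rcases eq_or_ne (prob (fun m => (f m, g m)) s) 0 with hp | hp
    · simp [hp, klFun_zero]
    · rw [klFun_apply, negMulLog, log_div hp (by positivity), log_mul hfa.ne' hgx.ne']
      field_simp
      ring
  have hq : ∑ s ∈ univ.image f ×ˢ univ.image g, prob f s.1 * prob g s.2 = 1 := by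
    rw [sum_product, ← sum_mul_sum, sum_prob, sum_prob, one_mul]
  have hp : ∑ s ∈ univ.image f ×ˢ univ.image g, prob (fun m => (f m, g m)) s = 1 := by
    rw [sum_product]
    simp only [sum_prob_pair_fst, sum_prob]
  rw [sum_congr rfl hterm]
  simp only [sum_add_distrib, sum_sub_distrib, sum_neg_distrib]
  rw [hq, hp, sum_prob_pair_mul_log_fst, sum_prob_pair_mul_log_snd,
    ← ent_eq_sum_negMulLog _ (image_pair_subset_product f g)]
  ring

lemma mul_klFun_div_nonneg {p q : ℝ} (hp : 0 ≤ p) (hq : 0 < q) : 0 ≤ q * klFun (p / q) :=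
  mul_nonneg hq.le (klFun_nonneg (div_nonneg hp hq.le))

lemma mul_klFun_div_pos {p q : ℝ} (hp : 0 ≤ p) (hq : 0 < q) (hpq : p ≠ q) :
    0 < q * klFun (p / q) := by
  refine mul_pos hq ((klFun_nonneg (div_nonneg hp hq.le)).lt_of_ne fun h => hpq ?_)
  exact (div_eq_one_iff_eq hq.ne').1 ((klFun_eq_zero_iff (div_nonneg hp hq.le)).1 h.symm)

lemma ent_pair_le [Nonempty M] (f : M → A) (g : M → X) :
    ent (fun m => (f m, g m)) ≤ ent f + ent g := by
  have h := ent_add_ent_sub_ent_pair f g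
  have : 0 ≤ ent f + ent g - ent (fun m => (f m, g m)) := h ▸ sum_nonneg fun _ hs =>
    mul_klFun_div_nonneg (prob_nonneg _ _) (prob_mul_prob_pos hs)
  linarith

lemma ent_pair_lt [Nonempty M] {f : M → A} {g : M → X}
    (h : ∃ s ∈ univ.image f ×ˢ univ.image g,
      prob (fun m => (f m, g m)) s ≠ prob f s.1 * prob g s.2) :
    ent (fun m => (f m, g m)) < ent f + ent g := by
  obtain ⟨s, hs, hne⟩ := h
  have : 0 < ent f + ent g - ent (fun m => (f m, g m)) := by
    rw [ent_add_ent_sub_ent_pair]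
    exact sum_pos' (fun _ ht => mul_klFun_div_nonneg (prob_nonneg _ _) (prob_mul_prob_pos ht))
      ⟨s, hs, mul_klFun_div_pos (prob_nonneg _ _) (prob_mul_prob_pos hs) hne⟩
  linarith

end Entropy

section Independence

variable {M A X C : Type*} [Fintype M] [DecidableEq A] [DecidableEq X]

-- Independence under the uniform distribution, with denominators cleared.
def UniformIndep (f : M → A) (g : M → X) : Prop :=
  ∀ a x, #{m | f m = a ∧ g m = x} * Fintype.card M = #{m | f m = a} * #{m | g m = x}

lemma prob_pair_eq_mul_iff [Nonempty M] (f : M → A) (g : M → X) (a : A) (x : X) :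
    prob (fun m => (f m, g m)) (a, x) = prob f a * prob g x ↔
      #{m | f m = a ∧ g m = x} * Fintype.card M = #{m | f m = a} * #{m | g m = x} := by
  have hM : (Fintype.card M : ℝ) ≠ 0 := by positivity
  simp only [prob, Prod.ext_iff]
  rw [div_mul_div_comm, div_eq_div_iff hM (mul_ne_zero hM hM), ← mul_assoc,
    mul_left_inj' hM]
  exact_mod_cast Iff.rfl

lemma exists_prob_pair_ne_of_not_uniformIndep [Nonempty M] {f : M → A} {g : M → X}
    (h : ¬ UniformIndep f g) :
    ∃ s ∈ univ.image f ×ˢ univ.image g,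
      prob (fun m => (f m, g m)) s ≠ prob f s.1 * prob g s.2 := by
  simp only [UniformIndep, not_forall] at h
  obtain ⟨a, x, hax⟩ := h
  refine ⟨(a, x), mem_product.2 ⟨?_, ?_⟩, (prob_pair_eq_mul_iff f g a x).not.2 hax⟩
  · by_contra ha
    simp_all
  · by_contra hx
    simp_all

lemma card_filter_mem_eq_sum (f : M → A) (S : Finset A) :
    #{m | f m ∈ S} = ∑ a ∈ S, #{m | f m = a} := by
  rw [card_eq_sum_card_fiberwise (f := f) (t := S) fun m hm => by simpa using hm]
  refine sum_congr rfl fun a ha => congrArg card ?_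
  ext m
  simp only [mem_filter, mem_univ, true_and]
  exact ⟨And.right, fun hm => ⟨hm ▸ ha, hm⟩⟩

lemma UniformIndep.card_mem_and_mem_mul {f : M → A} {g : M → X} (hfg : UniformIndep f g)
    (SA : Finset A) (SX : Finset X) :
    #{m | f m ∈ SA ∧ g m ∈ SX} * Fintype.card M = #{m | f m ∈ SA} * #{m | g m ∈ SX} := by
  have hpair : #{m | f m ∈ SA ∧ g m ∈ SX} = ∑ a ∈ SA, ∑ x ∈ SX, #{m | f m = a ∧ g m = x} := by
    simpa only [mem_product, Prod.ext_iff, sum_product] using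
      card_filter_mem_eq_sum (fun m => (f m, g m)) (SA ×ˢ SX)
  rw [hpair, card_filter_mem_eq_sum, card_filter_mem_eq_sum, sum_mul_sum, sum_mul]
  exact sum_congr rfl fun a _ => by rw [sum_mul]; exact sum_congr rfl fun x _ => hfg a x

lemma UniformIndep.apply_eq_of_factorsThrough {f : M → A} {g : M → X} (hfg : UniformIndep f g)
    {h : M → C} (hf : Function.FactorsThrough h f) (hg : Function.FactorsThrough h g)
    (m₁ m₂ : M) : h m₁ = h m₂ := by
  classical
  set U : Finset M := {m | h m = h m₁}
  have hUf : ∀ m, f m ∈ U.image f ↔ h m = h m₁ := fun m =>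
    ⟨fun hm => by
      obtain ⟨m', hm', he⟩ := mem_image.1 hm
      exact (hf he).symm.trans (mem_filter.1 hm').2,
     fun hm => mem_image_of_mem f (by simpa [U] using hm)⟩
  have hUg : ∀ m, g m ∈ U.image g ↔ h m = h m₁ := fun m =>
    ⟨fun hm => by
      obtain ⟨m', hm', he⟩ := mem_image.1 hm
      exact (hg he).symm.trans (mem_filter.1 hm').2,
     fun hm => mem_image_of_mem g (by simpa [U] using hm)⟩
  -- `U` is a union of fibres of `f` and also of `g`, so independence gives `#U * N = #U * #U`.
  have key := hfg.card_mem_and_mem_mul (U.image f) (U.image g)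
  simp only [hUf, hUg, and_self] at key
  have hU : U = univ :=
    eq_univ_of_card U (Nat.eq_of_mul_eq_mul_left (card_pos.2 ⟨m₁, by simp⟩) key).symm
  have hm₂ : m₂ ∈ U := hU ▸ mem_univ m₂
  exact (mem_filter.1 hm₂).2.symm

end Independence

lemma Serializable2Cycle.forall_eq_of_uniformIndep {M X Y A B : Type*} [Fintype M]
    [DecidableEq X] [DecidableEq Y] [DecidableEq A] [DecidableEq B]
    {fx : M → X} {fy : M → Y} {fa : M → A} {fb : M → B}
    (hser : Serializable2Cycle fx fy fa fb) (ha : UniformIndep fa fx) (hb : UniformIndep fb fy) :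
    (∀ m₁ m₂, fa m₁ = fa m₂) ∧ ∀ m₁ m₂, fb m₁ = fb m₂ := by
  obtain ⟨k, SA, SB, Fa, Fb, hfa, hfb, hFa, hFb⟩ := hser
  have hconst : ∀ j, (∀ m₁ m₂, Fa j m₁ = Fa j m₂) ∧ ∀ m₁ m₂, Fb j m₁ = Fb j m₂ := by
    intro j
    induction j using WellFoundedLT.induction with
    | _ j ih =>
      exact ⟨ha.apply_eq_of_factorsThrough (fun m₁ m₂ h => (hfa m₁ m₂).1 h j)
          fun m₁ m₂ h => hFa j m₁ m₂ h fun i hi => (ih i hi).2 m₁ m₂,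
        hb.apply_eq_of_factorsThrough (fun m₁ m₂ h => (hfb m₁ m₂).1 h j)
          fun m₁ m₂ h => hFb j m₁ m₂ h fun i hi => (ih i hi).1 m₁ m₂⟩
  exact ⟨fun m₁ m₂ => (hfa m₁ m₂).2 fun i => (hconst i).1 m₁ m₂,
    fun m₁ m₂ => (hfb m₁ m₂).2 fun i => (hconst i).2 m₁ m₂⟩

/-- The greedy inequality: for any serializable code on the 2-cycle with
`H(a) + H(b) > 0`, one has `H(a) + H(b) > H(a|x) + H(b|y)`. -/
theorem stmt9 {M X Y A B : Type*} [Fintype M] [Nonempty M]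
    [DecidableEq X] [DecidableEq Y] [DecidableEq A] [DecidableEq B]
    (fx : M → X) (fy : M → Y) (fa : M → A) (fb : M → B)
    (hser : Serializable2Cycle fx fy fa fb)
    (hpos : 0 < ent fa + ent fb) :
    (ent (fun m => (fa m, fx m)) - ent fx) + (ent (fun m => (fb m, fy m)) - ent fy)
      < ent fa + ent fb := by
  by_cases ha : UniformIndep fa fx
  · by_cases hb : UniformIndep fb fy
    · obtain ⟨hca, hcb⟩ := hser.forall_eq_of_uniformIndep ha hb
      rw [ent_eq_zero_of_forall_eq hca, ent_eq_zero_of_forall_eq hcb, add_zero] at hpos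
      exact absurd hpos (lt_irrefl 0)
    · linarith [ent_pair_le fa fx, ent_pair_lt (exists_prob_pair_ne_of_not_uniformIndep hb)]
  · linarith [ent_pair_le fb fy, ent_pair_lt (exists_prob_pair_ne_of_not_uniformIndep ha)]
end

section
/- For random variables (edge functions) on the 2-cycle satisfying the downstreamness relations H(abx) = H(bx) and H(aby) = H(ay) together with Shannon's inequalities, one has H(b|x) ≥ H(a|x). -/
open Finset

section Entropy

variable {M A B : Type*} [Fintype M] [DecidableEq A] [DecidableEq B]

/-- Coarsening `f` only enlarges each fibre, so in this form monotonicity holds term by term. -/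
lemma ent_eq_sum_neg_log (f : M → A) :
    ent f = ∑ m : M, -(Real.log ((#{m' | f m' = f m} : ℝ) / Fintype.card M) / Fintype.card M) := by
  rw [Finset.sum_comp (s := univ)
    (fun a : A => -(Real.log ((#{m' | f m' = a} : ℝ) / Fintype.card M) / Fintype.card M)) f,
    ent, ← sum_neg_distrib]
  refine sum_congr rfl fun a _ => ?_
  simp only [nsmul_eq_mul]
  ring

lemma ent_comp_le (f : M → A) (g : A → B) : ent (fun m => g (f m)) ≤ ent f := by
  rw [ent_eq_sum_neg_log, ent_eq_sum_neg_log]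
  refine sum_le_sum fun m _ => ?_
  have : Nonempty M := ⟨m⟩
  have hfibre_pos : 0 < #{m' | f m' = f m} := card_pos.2 ⟨m, by simp⟩
  have hfibre_le : (#{m' | f m' = f m} : ℝ) ≤ #{m' | g (f m') = g (f m)} := by
    exact_mod_cast card_le_card fun m' hm' => by simp_all
  have hlog : Real.log ((#{m' | f m' = f m} : ℝ) / Fintype.card M)
      ≤ Real.log ((#{m' | g (f m') = g (f m)} : ℝ) / Fintype.card M) :=
    Real.log_le_log (by positivity) (by gcongr)
  gcongr

end Entropy

theorem stmt10_general {M X A B : Type*} [Fintype M]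
    [DecidableEq X] [DecidableEq A] [DecidableEq B]
    (fx : M → X) (fa : M → A) (fb : M → B)
    (hdsa : ent (fun m => (fa m, fb m, fx m)) = ent (fun m => (fb m, fx m))) :
    ent (fun m => (fa m, fx m)) - ent fx ≤ ent (fun m => (fb m, fx m)) - ent fx := by
  have hax_le_abx : ent (fun m => (fa m, fx m)) ≤ ent (fun m => (fa m, fb m, fx m)) :=
    ent_comp_le (fun m => (fa m, fb m, fx m)) (fun p => (p.1, p.2.2))
  linarith

/-- Under downstreamness (`H(abx) = H(bx)` and `H(aby) = H(ay)`) one has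
`H(b|x) ≥ H(a|x)`. -/
theorem stmt10 {M X Y A B : Type*} [Fintype M] [Nonempty M]
    [DecidableEq X] [DecidableEq Y] [DecidableEq A] [DecidableEq B]
    (fx : M → X) (fy : M → Y) (fa : M → A) (fb : M → B)
    (hdsa : ent (fun m => (fa m, fb m, fx m)) = ent (fun m => (fb m, fx m)))
    (hdsb : ent (fun m => (fa m, fb m, fy m)) = ent (fun m => (fa m, fy m))) :
    ent (fun m => (fa m, fx m)) - ent fx ≤ ent (fun m => (fb m, fx m)) - ent fx :=
  stmt10_general fx fa fb hdsa
end

section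
/- For discrete random variables x, y, a, b satisfying downstreamness (H(abx) = H(bx), H(aby) = H(ay)) and Shannon's inequalities, the upper bound H(a) ≤ H(a|x) + H(a|y) + I(x;y) holds, where I(x;y) = H(x) + H(y) - H(xy), given additionally that H(axy) = H(xy). -/
/-!
Under the uniform distribution, `H(f)` is the average over messages `m` of
`log |M| - log n_f(m)`, where `n_f(m)` is the size of the fiber of `f` through `m`.
Substituting `H(axy) = H(xy)`, the claim becomes the submodularity inequality
`H(a) + H(axy) ≤ H(ax) + H(ay)`. By `log t ≤ t - 1` at each message, its defect is at most the
average of `n_ax n_ay / (n_a n_axy) - 1`, and this average is `≤ 0`: the sum over messages of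
`n_ax n_ay / (n_a n_axy)` is the sum of `n_ax n_ay / n_a` over the values `(a, x, y)` taken by
the triple, and summed over all triples it is `∑_a n_a = |M|`.
-/

open Finset Real

lemma log_add_log_sub_log_sub_log_le {p q r s : ℝ} (hp : 0 < p) (hq : 0 < q) (hr : 0 < r)
    (hs : 0 < s) : log p + log q - log r - log s ≤ p * q / (r * s) - 1 := by
  have h := log_le_sub_one_of_pos (div_pos (mul_pos hp hq) (mul_pos hr hs))
  rw [log_div (mul_pos hp hq).ne' (mul_pos hr hs).ne', log_mul hp.ne' hq.ne',
    log_mul hr.ne' hs.ne'] at h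
  linarith

section Fiber

variable {M : Type*} [Fintype M] {A B C : Type*} [DecidableEq A] [DecidableEq B] [DecidableEq C]

def fiber (f : M → A) (a : A) : Finset M := univ.filter fun m => f m = a

noncomputable def fiberCard (f : M → A) (m : M) : ℝ := #(fiber f (f m))

lemma card_fiber_pos_of_mem_image {f : M → A} {a : A} (ha : a ∈ univ.image f) :
    (0 : ℝ) < #(fiber f a) := by
  obtain ⟨m, -, rfl⟩ := mem_image.1 ha
  exact_mod_cast card_pos.2 ⟨m, by simp [fiber]⟩

lemma fiberCard_pos (f : M → A) (m : M) : 0 < fiberCard f m :=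
  card_fiber_pos_of_mem_image (mem_image_of_mem f (mem_univ m))

lemma fiber_pair (f : M → A) (g : M → B) (a : A) (b : B) :
    fiber (fun m => (f m, g m)) (a, b) = (fiber f a).filter fun m => g m = b := by
  ext m
  simp [fiber, Prod.ext_iff]

lemma sum_card_fiber_pair (f : M → A) (g : M → B) (a : A) :
    ∑ b ∈ univ.image g, (#(fiber (fun m => (f m, g m)) (a, b)) : ℝ) = #(fiber f a) := by
  rw [card_eq_sum_card_fiberwise (f := g) (t := univ.image g) fun m _ => mem_image_of_mem g
    (mem_univ m)]
  push_cast
  simp only [fiber_pair]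

lemma sum_div_fiberCard (f : M → A) (G : A → ℝ) :
    ∑ m, G (f m) / fiberCard f m = ∑ a ∈ univ.image f, G a := by
  unfold fiberCard
  rw [sum_comp (fun a => G a / #(fiber f a)) f]
  refine sum_congr rfl fun a ha => ?_
  rw [nsmul_eq_mul]
  exact mul_div_cancel₀ (G a) (card_fiber_pos_of_mem_image ha).ne'

lemma ent_eq_sum_log_fiberCard (f : M → A) :
    ent f = ∑ m, (log (Fintype.card M) - log (fiberCard f m)) / Fintype.card M := by
  let G : A → ℝ := fun a =>
    -(#(fiber f a) / Fintype.card M * log (#(fiber f a) / Fintype.card M))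
  have hsummand : ∀ m, (log (Fintype.card M) - log (fiberCard f m)) / Fintype.card M
      = G (f m) / fiberCard f m := fun m => by
    have hN : (0 : ℝ) < Fintype.card M := by exact_mod_cast Fintype.card_pos_iff.2 ⟨m⟩
    have hn := fiberCard_pos f m
    change _ = -(fiberCard f m / Fintype.card M * log (fiberCard f m / Fintype.card M))
      / fiberCard f m
    rw [log_div hn.ne' hN.ne']
    field_simp
    ring
  rw [sum_congr rfl fun m _ => hsummand m, sum_div_fiberCard, ent, ← sum_neg_distrib]
  rfl

lemma sum_fiberCard_ratio_le_card (f : M → A) (g : M → B) (h : M → C) :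
    ∑ m, fiberCard (fun m => (f m, g m)) m * fiberCard (fun m => (f m, h m)) m
        / (fiberCard f m * fiberCard (fun m => (f m, g m, h m)) m) ≤ Fintype.card M := by
  set G : A × B × C → ℝ := fun v =>
    (#(fiber (fun m => (f m, g m)) (v.1, v.2.1)) : ℝ)
      * #(fiber (fun m => (f m, h m)) (v.1, v.2.2)) / #(fiber f v.1)
  calc _ = ∑ m, G (f m, g m, h m) / fiberCard (fun m => (f m, g m, h m)) m := by
          simp only [G, fiberCard, div_div]
    _ = ∑ v ∈ univ.image fun m => (f m, g m, h m), G v := sum_div_fiberCard _ G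
    _ ≤ ∑ v ∈ univ.image f ×ˢ univ.image g ×ˢ univ.image h, G v := by
          refine sum_le_sum_of_subset_of_nonneg ?_ fun v _ _ => by positivity
          intro v hv
          obtain ⟨m, -, rfl⟩ := mem_image.1 hv
          simp
    _ = ∑ a ∈ univ.image f,
          (∑ b ∈ univ.image g, (#(fiber (fun m => (f m, g m)) (a, b)) : ℝ))
          * (∑ c ∈ univ.image h, (#(fiber (fun m => (f m, h m)) (a, c)) : ℝ))
          / #(fiber f a) := by
          simp only [sum_product, sum_mul_sum, sum_div, G]
    _ = ∑ a ∈ univ.image f, (#(fiber f a) : ℝ) := by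
          refine sum_congr rfl fun a ha => ?_
          have := card_fiber_pos_of_mem_image ha
          rw [sum_card_fiber_pair, sum_card_fiber_pair, mul_self_div_self]
    _ = Fintype.card M := by
          rw [← Nat.cast_sum, ← card_univ, card_eq_sum_card_image f univ]
          rfl

lemma ent_add_ent_le_ent_add_ent (f : M → A) (g : M → B) (h : M → C) :
    ent f + ent (fun m => (f m, g m, h m))
      ≤ ent (fun m => (f m, g m)) + ent (fun m => (f m, h m)) := by
  have hdefect : ∑ m, (log (fiberCard (fun m => (f m, g m)) m)
      + log (fiberCard (fun m => (f m, h m)) m) - log (fiberCard f m)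
      - log (fiberCard (fun m => (f m, g m, h m)) m)) ≤ 0 := by
    calc _ ≤ ∑ m, (fiberCard (fun m => (f m, g m)) m * fiberCard (fun m => (f m, h m)) m
              / (fiberCard f m * fiberCard (fun m => (f m, g m, h m)) m) - 1) :=
          sum_le_sum fun m _ => log_add_log_sub_log_sub_log_le (fiberCard_pos _ m)
            (fiberCard_pos _ m) (fiberCard_pos _ m) (fiberCard_pos _ m)
      _ ≤ 0 := by
          rw [sum_sub_distrib, sum_const, card_univ, nsmul_one, sub_nonpos]
          exact sum_fiberCard_ratio_le_card f g h
  rw [← sub_nonpos]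
  calc _ = (∑ m, (log (fiberCard (fun m => (f m, g m)) m)
          + log (fiberCard (fun m => (f m, h m)) m) - log (fiberCard f m)
          - log (fiberCard (fun m => (f m, g m, h m)) m))) / Fintype.card M := by
        simp only [ent_eq_sum_log_fiberCard, ← sum_add_distrib, ← sum_sub_distrib, sum_div]
        exact sum_congr rfl fun m _ => by ring
    _ ≤ 0 := div_nonpos_of_nonpos_of_nonneg hdefect (Nat.cast_nonneg _)

end Fiber

theorem stmt11_general {M X Y A : Type*} [Fintype M]
    [DecidableEq X] [DecidableEq Y] [DecidableEq A]
    (fx : M → X) (fy : M → Y) (fa : M → A)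
    (haxy : ent (fun m => (fa m, fx m, fy m)) = ent (fun m => (fx m, fy m))) :
    ent fa ≤ (ent (fun m => (fa m, fx m)) - ent fx)
        + (ent (fun m => (fa m, fy m)) - ent fy)
        + (ent fx + ent fy - ent (fun m => (fx m, fy m))) := by
  linarith [ent_add_ent_le_ent_add_ent fa fx fy]

/-- Under downstreamness and `H(axy) = H(xy)`,
`H(a) ≤ H(a|x) + H(a|y) + I(x;y)`. -/
theorem stmt11 {M X Y A B : Type*} [Fintype M] [Nonempty M]
    [DecidableEq X] [DecidableEq Y] [DecidableEq A] [DecidableEq B]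
    (fx : M → X) (fy : M → Y) (fa : M → A) (fb : M → B)
    (hdsa : ent (fun m => (fa m, fb m, fx m)) = ent (fun m => (fb m, fx m)))
    (hdsb : ent (fun m => (fa m, fb m, fy m)) = ent (fun m => (fa m, fy m)))
    (haxy : ent (fun m => (fa m, fx m, fy m)) = ent (fun m => (fx m, fy m))) :
    ent fa ≤ (ent (fun m => (fa m, fx m)) - ent fx)
        + (ent (fun m => (fa m, fy m)) - ent fy)
        + (ent fx + ent fy - ent (fun m => (fx m, fy m))) :=
  stmt11_general fx fy fa haxy
end

section
/- Let Φ be a linear network code over a field F with message dual space M* of dimension d, possessing a nontrivial information vortex {W_e}, and fix an edge e with k = dim W_e < m = dim T_e. Then for every n ≥ 1, the linear serializability deficit of the n-fold repetition Φ^n is at least ((m−k)/d²)·n; more precisely, if adding extra linear functionals spanning a subspace T ⊆ M* ⊗ F^n of dimension p to every edge makes Φ^n serializable, then p ≥ ((m−k)/d²)·n. -/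
/-!
An information vortex `{W e}` of `Φ` survives in `Φ^n` as `{W e ⊗ F^n}`. The extra functionals
`Tt` have only `dim Tt · d` coordinates in `F^n`; they span some `Q ⊆ F^n`, so `Tt ⊆ M* ⊗ Q`.
Since `(A ⊗ F^n + M* ⊗ Q) ∩ (B ⊗ F^n + M* ⊗ Q) = (A ∩ B) ⊗ F^n + M* ⊗ Q`, the family
`W e ⊗ F^n + M* ⊗ Q` is closed under the vortex recursion of the extended code, hence contains its
least vortex. If the extended code is serializable that vortex is trivial, so
`T e₀ ⊗ F^n ⊆ W e₀ ⊗ F^n + M* ⊗ Q`, and comparing dimensions gives `m n ≤ k n + d² p`.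
-/

open TensorProduct Module

/-- For subspaces `A ⊆ V`, `C ⊆ W`, the subspace `A ⊗ C` of `V ⊗ W`:
the span of all elementary tensors `a ⊗ c` with `a ∈ A`, `c ∈ C`. -/
def tensSub (F : Type*) [Field F] {V W : Type*} [AddCommGroup V] [Module F V]
    [AddCommGroup W] [Module F W] (A : Submodule F V) (C : Submodule F W) :
    Submodule F (V ⊗[F] W) :=
  Submodule.span F {t | ∃ a ∈ A, ∃ c ∈ C, t = a ⊗ₜ[F] c}

section Vortex

variable {α E : Type*} [CompleteLattice α] (Src : Set E) (In : E → Set E)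

def IsInfoVortex (T W : E → α) : Prop :=
  (∀ e, W e ≤ T e) ∧ (∀ s ∈ Src, W s = T s) ∧ ∀ e ∉ Src, W e = T e ⊓ ⨆ e' ∈ In e, W e'

open Classical in
noncomputable def vortexStep (T : E → α) : (E → α) →o (E → α) where
  toFun X e := if e ∈ Src then T e else T e ⊓ ⨆ e' ∈ In e, X e'
  monotone' X Y hXY e := by
    dsimp only
    split_ifs
    · exact le_rfl
    · exact inf_le_inf_left _ (iSup₂_mono fun e' _ => hXY e')

open Classical in
theorem vortexStep_apply (T X : E → α) (e : E) :
    vortexStep Src In T X e = if e ∈ Src then T e else T e ⊓ ⨆ e' ∈ In e, X e' :=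
  rfl

theorem isInfoVortex_lfp_vortexStep (T : E → α) :
    IsInfoVortex Src In T (OrderHom.lfp (vortexStep Src In T)) := by
  set X := OrderHom.lfp (vortexStep Src In T)
  have hfix e : X e = vortexStep Src In T X e := by rw [OrderHom.map_lfp]
  refine ⟨fun e => ?_, fun s hs => ?_, fun e he => ?_⟩
  · rw [hfix, vortexStep_apply]
    split_ifs
    exacts [le_rfl, inf_le_left]
  · rw [hfix, vortexStep_apply, if_pos hs]
  · rw [hfix, vortexStep_apply, if_neg he]

theorem le_of_forall_isInfoVortex_eq {T V : E → α}
    (hser : ∀ X, IsInfoVortex Src In T X → X = T)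
    (hsrc : ∀ s ∈ Src, T s ≤ V s) (hord : ∀ e ∉ Src, T e ⊓ ⨆ e' ∈ In e, V e' ≤ V e) :
    T ≤ V := by
  rw [← hser _ (isInfoVortex_lfp_vortexStep Src In T)]
  refine OrderHom.lfp_le _ fun e => ?_
  rw [vortexStep_apply]
  split_ifs with he
  exacts [hsrc e he, hord e he]

end Vortex

section TensSub

variable {F : Type*} [Field F] {V U : Type*} [AddCommGroup V] [Module F V]
  [AddCommGroup U] [Module F U]

theorem tmul_mem_tensSub {A : Submodule F V} {C : Submodule F U} {a : V} {c : U}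
    (ha : a ∈ A) (hc : c ∈ C) : a ⊗ₜ[F] c ∈ tensSub F A C :=
  Submodule.subset_span ⟨a, ha, c, hc, rfl⟩

theorem tensSub_mono {A A' : Submodule F V} {C C' : Submodule F U} (hA : A ≤ A') (hC : C ≤ C') :
    tensSub F A C ≤ tensSub F A' C' :=
  Submodule.span_mono (by rintro t ⟨a, ha, c, hc, rfl⟩; exact ⟨a, hA ha, c, hC hc, rfl⟩)

theorem map_tensSub {V' U' : Type*} [AddCommGroup V'] [Module F V'] [AddCommGroup U']
    [Module F U'] (f : V →ₗ[F] V') (g : U →ₗ[F] U') (A : Submodule F V) (C : Submodule F U) :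
    (tensSub F A C).map (TensorProduct.map f g) = tensSub F (A.map f) (C.map g) := by
  rw [tensSub, tensSub, Submodule.map_span]
  congr 1
  ext t
  constructor
  · rintro ⟨_, ⟨a, ha, c, hc, rfl⟩, rfl⟩
    exact ⟨f a, ⟨a, ha, rfl⟩, g c, ⟨c, hc, rfl⟩, rfl⟩
  · rintro ⟨_, ⟨a, ha, rfl⟩, _, ⟨c, hc, rfl⟩, rfl⟩
    exact ⟨a ⊗ₜ c, ⟨a, ha, c, hc, rfl⟩, rfl⟩

theorem tensSub_top_right (A : Submodule F V) :
    tensSub F A (⊤ : Submodule F U) = LinearMap.range (A.subtype.rTensor U) := by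
  apply le_antisymm
  · rw [tensSub, Submodule.span_le]
    rintro _ ⟨a, ha, c, -, rfl⟩
    exact ⟨(⟨a, ha⟩ : A) ⊗ₜ c, rfl⟩
  · rw [LinearMap.range_eq_map, ← span_tmul_eq_top F A U, Submodule.map_span, Submodule.span_le]
    rintro _ ⟨_, ⟨a, c, rfl⟩, rfl⟩
    exact tmul_mem_tensSub a.2 trivial

theorem tensSub_top_left (C : Submodule F U) :
    tensSub F (⊤ : Submodule F V) C = LinearMap.range (C.subtype.lTensor V) := by
  apply le_antisymm
  · rw [tensSub, Submodule.span_le]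
    rintro _ ⟨a, -, c, hc, rfl⟩
    exact ⟨a ⊗ₜ (⟨c, hc⟩ : C), rfl⟩
  · rw [LinearMap.range_eq_map, ← span_tmul_eq_top F V C, Submodule.map_span, Submodule.span_le]
    rintro _ ⟨_, ⟨a, c, rfl⟩, rfl⟩
    exact tmul_mem_tensSub trivial c.2

theorem mem_tensSub_top_right_iff {κ : Type*} [DecidableEq κ] (𝒞 : Basis κ F U)
    (A : Submodule F V) (x : V ⊗[F] U) :
    x ∈ tensSub F A ⊤ ↔ ∀ i, equivFinsuppOfBasisRight 𝒞 x i ∈ A := by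
  constructor
  · intro hx
    induction hx using Submodule.span_induction with
    | mem t ht =>
      obtain ⟨a, ha, c, -, rfl⟩ := ht
      intro i
      rw [equivFinsuppOfBasisRight_apply_tmul_apply]
      exact A.smul_mem _ ha
    | zero => simp
    | add x y _ _ hx hy => simpa using fun i => A.add_mem (hx i) (hy i)
    | smul r x _ hx => simpa using fun i => A.smul_mem r (hx i)
  · intro hx
    rw [← (equivFinsuppOfBasisRight 𝒞).symm_apply_apply x, equivFinsuppOfBasisRight_symm_apply]
    exact Submodule.sum_mem _ fun i _ => tmul_mem_tensSub (hx i) trivial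

theorem tensSub_top_right_inf (A B : Submodule F V) :
    tensSub F A (⊤ : Submodule F U) ⊓ tensSub F B ⊤ = tensSub F (A ⊓ B) ⊤ := by
  classical
  ext x
  simp only [Submodule.mem_inf, mem_tensSub_top_right_iff (Free.chooseBasis F U), forall_and]

theorem comap_lTensor_mkQ_tensSub_top_right (A : Submodule F V) (Q : Submodule F U) :
    (tensSub F A ⊤).comap (Q.mkQ.lTensor V) = tensSub F A ⊤ ⊔ tensSub F ⊤ Q := by
  have hmap : (tensSub F A ⊤).map (Q.mkQ.lTensor V) = tensSub F A ⊤ := by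
    rw [LinearMap.lTensor, map_tensSub, Submodule.map_id, Submodule.map_top, Q.range_mkQ]
  rw [← hmap, Submodule.comap_map_eq, lTensor_mkQ, ← tensSub_top_left]

/-- Passing to `V ⊗ (U ⧸ Q)` reduces this to `(A ⊗ U) ∩ (B ⊗ U) = (A ∩ B) ⊗ U`. -/
theorem tensSub_sup_inf_tensSub_sup (A B : Submodule F V) (Q : Submodule F U) :
    (tensSub F A ⊤ ⊔ tensSub F ⊤ Q) ⊓ (tensSub F B ⊤ ⊔ tensSub F ⊤ Q) =
      tensSub F (A ⊓ B) ⊤ ⊔ tensSub F ⊤ Q := by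
  simp only [← comap_lTensor_mkQ_tensSub_top_right, ← Submodule.comap_inf, tensSub_top_right_inf]

theorem exists_le_tensSub_top_left [FiniteDimensional F V] (S : Submodule F (V ⊗[F] U))
    [FiniteDimensional F S] :
    ∃ Q : Submodule F U, S ≤ tensSub F ⊤ Q ∧ finrank F Q ≤ finrank F V * finrank F S := by
  classical
  let b := finBasis F V
  let s := finBasis F S
  let w : Fin (finrank F V) × Fin (finrank F S) → U := fun ij =>
    equivFinsuppOfBasisLeft b (s ij.2) ij.1
  refine ⟨Submodule.span F (Set.range w), fun x hx => ?_, ?_⟩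
  · suffices ⊤ ≤ (tensSub F ⊤ (Submodule.span F (Set.range w))).comap S.subtype from
      this (Submodule.mem_top (x := ⟨x, hx⟩))
    rw [← s.span_eq, Submodule.span_le]
    rintro _ ⟨j, rfl⟩
    rw [SetLike.mem_coe, Submodule.mem_comap, Submodule.subtype_apply,
      ← (equivFinsuppOfBasisLeft b).symm_apply_apply (s j : V ⊗[F] U),
      equivFinsuppOfBasisLeft_symm_apply,
      Finsupp.sum_fintype _ _ (by simp)]
    exact Submodule.sum_mem _ fun i _ =>
      tmul_mem_tensSub trivial (Submodule.subset_span ⟨(i, j), rfl⟩)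
  · exact (finrank_range_le_card w).trans_eq (by simp)

section Finrank

variable [FiniteDimensional F V] [FiniteDimensional F U]

theorem finrank_tensSub_top_right (A : Submodule F V) :
    finrank F (tensSub F A (⊤ : Submodule F U)) = finrank F A * finrank F U := by
  rw [tensSub_top_right, LinearMap.finrank_range_of_inj
    (Flat.rTensor_preserves_injective_linearMap _ A.injective_subtype), finrank_tensorProduct]

theorem finrank_tensSub_top_left_le (C : Submodule F U) :
    finrank F (tensSub F (⊤ : Submodule F V) C) ≤ finrank F V * finrank F C := by
  rw [tensSub_top_left, ← finrank_tensorProduct]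
  exact LinearMap.finrank_range_le _

theorem finrank_mul_le_of_tensSub_top_le {A B : Submodule F V} {Q : Submodule F U}
    (h : tensSub F A ⊤ ≤ tensSub F B ⊤ ⊔ tensSub F ⊤ Q) :
    finrank F A * finrank F U ≤ finrank F B * finrank F U + finrank F V * finrank F Q := by
  calc finrank F A * finrank F U = finrank F (tensSub F A (⊤ : Submodule F U)) :=
        (finrank_tensSub_top_right A).symm
    _ ≤ finrank F ↥(tensSub F B ⊤ ⊔ tensSub F ⊤ Q) := Submodule.finrank_mono h
    _ ≤ finrank F (tensSub F B (⊤ : Submodule F U)) + finrank F (tensSub F ⊤ Q) :=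
        Submodule.finrank_add_le_finrank_add_finrank _ _
    _ ≤ _ := by
        rw [finrank_tensSub_top_right]
        exact Nat.add_le_add_left (finrank_tensSub_top_left_le Q) _

end Finrank

theorem tensSub_top_le_of_serializable {E : Type*} {Src : Set E} {In : E → Set E}
    {T W : E → Submodule F V} (hsrc : ∀ s ∈ Src, W s = T s)
    (hord : ∀ e ∉ Src, W e = T e ⊓ ⨆ e' ∈ In e, W e')
    {Tt : Submodule F (V ⊗[F] U)} {Q : Submodule F U} (hTtQ : Tt ≤ tensSub F ⊤ Q)
    (hser : ∀ X, IsInfoVortex Src In (fun e => tensSub F (T e) ⊤ ⊔ Tt) X →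
      X = fun e => tensSub F (T e) ⊤ ⊔ Tt) (e : E) :
    tensSub F (T e) ⊤ ≤ tensSub F (W e) ⊤ ⊔ tensSub F ⊤ Q := by
  have hT' : ∀ e, tensSub F (T e) ⊤ ⊔ Tt ≤ tensSub F (T e) ⊤ ⊔ tensSub F ⊤ Q := fun e =>
    sup_le_sup_left hTtQ _
  refine le_sup_left.trans (le_of_forall_isInfoVortex_eq Src In hser
    (V := fun e => tensSub F (W e) ⊤ ⊔ tensSub F ⊤ Q) (fun s hs => ?_) (fun e he => ?_) e)
  · rw [hsrc s hs]
    exact hT' s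
  · have hIn : ⨆ e' ∈ In e, (tensSub F (W e') ⊤ ⊔ tensSub F ⊤ Q) ≤
        tensSub F (⨆ e' ∈ In e, W e') ⊤ ⊔ tensSub F ⊤ Q :=
      iSup₂_le fun e' he' => sup_le_sup_right (tensSub_mono (le_biSup W he') le_rfl) _
    calc _ ≤ (tensSub F (T e) ⊤ ⊔ tensSub F ⊤ Q) ⊓
          (tensSub F (⨆ e' ∈ In e, W e') ⊤ ⊔ tensSub F ⊤ Q) := inf_le_inf (hT' e) hIn
      _ = tensSub F (W e) ⊤ ⊔ tensSub F ⊤ Q := by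
        rw [tensSub_sup_inf_tensSub_sup, ← hord e he]

end TensSub

theorem sub_div_sq_mul_le {m k d n p : ℕ} (h : m * n ≤ k * n + d ^ 2 * p) :
    ((m : ℝ) - k) / (d ^ 2 : ℝ) * n ≤ p := by
  rcases eq_or_ne d 0 with rfl | hd
  · simp
  rw [div_mul_eq_mul_div, div_le_iff₀ (by positivity)]
  have h' : (m : ℝ) * n ≤ k * n + d ^ 2 * p := by exact_mod_cast h
  linarith

theorem stmt16_general {F : Type*} [Field F] {D : Type*} [AddCommGroup D] [Module F D]
    [FiniteDimensional F D]
    {E : Type*} (Src : Set E) (In : E → Set E) (T W : E → Submodule F D)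
    (hsrc : ∀ s ∈ Src, W s = T s)
    (hord : ∀ e ∉ Src, W e = T e ⊓ ⨆ e' ∈ In e, W e')
    (d m k : ℕ) (hd : Module.finrank F D = d)
    (e₀ : E) (hm : Module.finrank F (T e₀) = m) (hk : Module.finrank F (W e₀) = k)
    (n : ℕ)
    (Tt : Submodule F (D ⊗[F] (Fin n → F))) (p : ℕ) (hp : Module.finrank F Tt = p)
    (hser : ∀ W' : E → Submodule F (D ⊗[F] (Fin n → F)),
      (∀ e, W' e ≤ tensSub F (T e) (⊤ : Submodule F (Fin n → F)) ⊔ Tt) →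
      (∀ s ∈ Src, W' s = tensSub F (T s) (⊤ : Submodule F (Fin n → F)) ⊔ Tt) →
      (∀ e ∉ Src, W' e = (tensSub F (T e) (⊤ : Submodule F (Fin n → F)) ⊔ Tt)
          ⊓ ⨆ e' ∈ In e, W' e') →
      ∀ e, W' e = tensSub F (T e) (⊤ : Submodule F (Fin n → F)) ⊔ Tt) :
    ((m : ℝ) - k) / (d ^ 2 : ℝ) * n ≤ p := by
  obtain ⟨Q, hTtQ, hQ⟩ := exists_le_tensSub_top_left Tt
  have hcover := tensSub_top_le_of_serializable hsrc hord hTtQ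
    (fun X hX => funext (hser X hX.1 hX.2.1 hX.2.2)) e₀
  have hdim := finrank_mul_le_of_tensSub_top_le hcover
  rw [hm, hk, hd, finrank_fin_fun] at hdim
  rw [hd, hp] at hQ
  refine sub_div_sq_mul_le (hdim.trans ?_)
  rw [sq, mul_assoc]
  gcongr

/-- Lower bound on the linear serializability deficit of the n-fold repetition.
Suppose a linear network code with edge spaces `{T e}` in `M*` (of dimension `d`)
has a nontrivial information vortex `{W e}` with `dim (W e₀) = k < m = dim (T e₀)`.
If adding a subspace `Tt ⊆ M* ⊗ F^n` of extra functionals of dimension `p` to every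
edge makes the n-fold repetition serializable — i.e. the extended code, with edge
spaces `(T e ⊗ F^n) + Tt`, has no nontrivial information vortex — then
`p ≥ ((m - k)/d²)·n`. -/
theorem stmt16 {F : Type*} [Field F] {D : Type*} [AddCommGroup D] [Module F D]
    [FiniteDimensional F D]
    {E : Type*} (Src : Set E) (In : E → Set E) (T W : E → Submodule F D)
    (hle : ∀ e, W e ≤ T e)
    (hsrc : ∀ s ∈ Src, W s = T s)
    (hord : ∀ e ∉ Src, W e = T e ⊓ ⨆ e' ∈ In e, W e')
    (d m k : ℕ) (hd : Module.finrank F D = d)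
    (e₀ : E) (hm : Module.finrank F (T e₀) = m) (hk : Module.finrank F (W e₀) = k)
    (hkm : k < m)
    (n : ℕ) (hn : 1 ≤ n)
    (Tt : Submodule F (D ⊗[F] (Fin n → F))) (p : ℕ) (hp : Module.finrank F Tt = p)
    (hser : ∀ W' : E → Submodule F (D ⊗[F] (Fin n → F)),
      (∀ e, W' e ≤ tensSub F (T e) (⊤ : Submodule F (Fin n → F)) ⊔ Tt) →
      (∀ s ∈ Src, W' s = tensSub F (T s) (⊤ : Submodule F (Fin n → F)) ⊔ Tt) →
      (∀ e ∉ Src, W' e = (tensSub F (T e) (⊤ : Submodule F (Fin n → F)) ⊔ Tt)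
          ⊓ ⨆ e' ∈ In e, W' e') →
      ∀ e, W' e = tensSub F (T e) (⊤ : Submodule F (Fin n → F)) ⊔ Tt) :
    ((m : ℝ) - k) / (d ^ 2 : ℝ) * n ≤ p :=
  stmt16_general Src In T W hsrc hord d m k hd e₀ hm hk n Tt p hp hser
end

section
/- Consider the 2-cycle network code over F_2 with message tuple (X, Y, Z) of independent uniform bits, where source x = (X, Z) enters u, source y = (Y, Z) enters v, and the coding functions on a = (u,v) and b = (v,u) are both f_a = f_b = X + Y. Then this code is not serializable: the subspaces W_x = span{X*, Z*}, W_y = span{Y*, Z*}, W_a = W_b = 0 of the dual of F_2³ form a nontrivial information vortex, i.e., T_a ∩ (W_b + W_x) = 0 and T_b ∩ (W_a + W_y) = 0 where T_a = T_b = span{X* + Y*}. -/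
/-! Each intersection is trivial because a single vector separates `X* + Y*` from the other
subspace: `e_Y` is killed by `X*` and `Z*`, `e_X` by `Y*` and `Z*`, while `X* + Y*` is `1`
at both. -/

/-- The coordinate functionals `X*, Y*, Z*` on the message space `F₂³`. -/
noncomputable def Xs : (Fin 3 → ZMod 2) →ₗ[ZMod 2] ZMod 2 := LinearMap.proj 0
noncomputable def Ys : (Fin 3 → ZMod 2) →ₗ[ZMod 2] ZMod 2 := LinearMap.proj 1
noncomputable def Zs : (Fin 3 → ZMod 2) →ₗ[ZMod 2] ZMod 2 := LinearMap.proj 2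

open Submodule Module

section Dual

variable {K V : Type*} [Field K] [AddCommGroup V] [Module K V]

theorem span_singleton_inf_eq_bot_of_mem_dualCoannihilator {f : Dual K V}
    {Φ : Submodule K (Dual K V)} {v : V} (hv : v ∈ Φ.dualCoannihilator) (hf : f v ≠ 0) :
    K ∙ f ⊓ Φ = ⊥ :=
  (disjoint_span_singleton_of_notMem fun hfΦ =>
    hf ((mem_dualCoannihilator v).1 hv f hfΦ)).symm.eq_bot

theorem mem_dualCoannihilator_span_pair {g h : Dual K V} {v : V} :
    v ∈ (span K {g, h}).dualCoannihilator ↔ g v = 0 ∧ h v = 0 := by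
  rw [← SetLike.mem_coe, coe_dualCoannihilator_span]
  simp

end Dual

theorem Xs_add_Ys_apply_single_zero : (Xs + Ys) (Pi.single 0 1) = 1 := by
  simp [Xs, Ys]

theorem Xs_add_Ys_apply_single_one : (Xs + Ys) (Pi.single 1 1) = 1 := by
  simp [Xs, Ys]

theorem single_one_mem_dualCoannihilator_span_Xs_Zs :
    (Pi.single 1 1 : Fin 3 → ZMod 2) ∈ (span (ZMod 2) {Xs, Zs}).dualCoannihilator :=
  mem_dualCoannihilator_span_pair.2 ⟨by simp [Xs], by simp [Zs]⟩

theorem single_zero_mem_dualCoannihilator_span_Ys_Zs :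
    (Pi.single 0 1 : Fin 3 → ZMod 2) ∈ (span (ZMod 2) {Ys, Zs}).dualCoannihilator :=
  mem_dualCoannihilator_span_pair.2 ⟨by simp [Ys], by simp [Zs]⟩

/-- The 2-cycle code over `F₂` with sources `x = (X,Z)`, `y = (Y,Z)` and
`f_a = f_b = X + Y` has a nontrivial information vortex with
`W_x = span{X*,Z*}`, `W_y = span{Y*,Z*}`, `W_a = W_b = 0`:
`T_a ∩ (W_b + W_x) = 0` and `T_b ∩ (W_a + W_y) = 0`, while `T_a ≠ 0`;
hence the code is not serializable. -/
theorem stmt17 :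
    Submodule.span (ZMod 2) {Xs + Ys} ⊓
        ((⊥ : Submodule (ZMod 2) ((Fin 3 → ZMod 2) →ₗ[ZMod 2] ZMod 2))
          ⊔ Submodule.span (ZMod 2) {Xs, Zs}) = ⊥ ∧
    Submodule.span (ZMod 2) {Xs + Ys} ⊓
        ((⊥ : Submodule (ZMod 2) ((Fin 3 → ZMod 2) →ₗ[ZMod 2] ZMod 2))
          ⊔ Submodule.span (ZMod 2) {Ys, Zs}) = ⊥ ∧
    Submodule.span (ZMod 2) {Xs + Ys} ≠ ⊥ := by
  have hX : (Xs + Ys) (Pi.single 0 1) ≠ 0 := by rw [Xs_add_Ys_apply_single_zero]; exact one_ne_zero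
  have hY : (Xs + Ys) (Pi.single 1 1) ≠ 0 := by rw [Xs_add_Ys_apply_single_one]; exact one_ne_zero
  simp only [bot_sup_eq, ne_eq, span_singleton_eq_bot]
  exact ⟨span_singleton_inf_eq_bot_of_mem_dualCoannihilator
      single_one_mem_dualCoannihilator_span_Xs_Zs hY,
    span_singleton_inf_eq_bot_of_mem_dualCoannihilator
      single_zero_mem_dualCoannihilator_span_Ys_Zs hX,
    fun h => hX (by rw [h]; rfl)⟩
end
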